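/- In ℚ[λ1, ψ1, θ1], the ideal generated by the five elements g₁ = (10λ1 + 10θ1)θ1, g₂ = 3(10λ1−2θ1)³ + 11(10λ1−2θ1)²θ1, g₃ = θ1(θ1² + 2θ1ψ1 + 4ψ1²), g₄ = ψ1((λ1+θ1)(7ψ1−λ1) − 12ψ1²), g₅ = ψ1(λ1²/2 − ψ1(λ1−ψ1)) equals the ideal K' generated by α₂,₃ = θ1(λ1+θ1), β′₃,₁ = 10λ1³ − 2λ1²θ1, β′₃,₂ = ψ1λ1² − 2ψ1²(λ1−ψ1), β′₃,₃ = (λ1²/2 − ψ1(λ1−ψ1))(θ1+λ1−ψ1), β′₃,₄ = 2ψ1(λ1+θ1)(7ψ1−λ1) − 24ψ1³. Consequently the substitution ψ1 ↦ ψ1, δ0 ↦ 10λ1 − 2θ1, δ1 ↦ θ1 induces a ℚ-algebra isomorphism ℚ[ψ1,δ0,δ1]/(γ₂,₁, γ₃,₁, γ₃,₂, γ₃,₃, γ₃,₄) ≅ ℚ[λ1,ψ1,θ1]/K'. -/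
import Mathlib


open MvPolynomial

/-- The ideal `K' ⊂ ℚ[λ1, ψ1, θ1]` generated by `α₂,₃, β′₃,₁, β′₃,₂, β′₃,₃, β′₃,₄`.
Variables: `λ1 = X 0`, `ψ1 = X 1`, `θ1 = X 2`. -/
noncomputable def K' : Ideal (MvPolynomial (Fin 3) ℚ) :=
  Ideal.span {X 2 * (X 0 + X 2),
    10 * X 0 ^ 3 - 2 * X 0 ^ 2 * X 2,
    X 1 * X 0 ^ 2 - 2 * X 1 ^ 2 * (X 0 - X 1),
    (C (1/2 : ℚ) * X 0 ^ 2 - X 1 * (X 0 - X 1)) * (X 2 + X 0 - X 1),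
    2 * X 1 * (X 0 + X 2) * (7 * X 1 - X 0) - 24 * X 1 ^ 3}

/-- The substitution `ψ1 ↦ ψ1`, `δ0 ↦ 10λ1 − 2θ1`, `δ1 ↦ θ1` from Faber's ring
`ℚ[ψ1, δ0, δ1]` (variables `ψ1 = X 0`, `δ0 = X 1`, `δ1 = X 2`) to `ℚ[λ1, ψ1, θ1]`
(variables `λ1 = X 0`, `ψ1 = X 1`, `θ1 = X 2`). -/
noncomputable def σsub : MvPolynomial (Fin 3) ℚ →ₐ[ℚ] MvPolynomial (Fin 3) ℚ :=
  aeval ![X 1, 10 * X 0 - 2 * X 2, X 2]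

/-- Inverse substitution to `σsub`. -/
noncomputable def τsub : MvPolynomial (Fin 3) ℚ →ₐ[ℚ] MvPolynomial (Fin 3) ℚ :=
  aeval ![C (1/10 : ℚ) * (X 1 + 2 * X 2), X 0, X 2]

lemma hC2 : (2 : MvPolynomial (Fin 3) ℚ) * C (1/2 : ℚ) = 1 := by
  rw [show (2 : MvPolynomial (Fin 3) ℚ) = C (2 : ℚ) from (map_ofNat _ _).symm, ← C_mul]
  norm_num

lemma hC10 : (10 : MvPolynomial (Fin 3) ℚ) * C ((10 : ℚ)⁻¹) = 1 := by
  rw [show (10 : MvPolynomial (Fin 3) ℚ) = C (10 : ℚ) from (map_ofNat _ _).symm, ← C_mul]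
  norm_num

lemma divQ_mem {I : Ideal (MvPolynomial (Fin 3) ℚ)} {x : MvPolynomial (Fin 3) ℚ}
    (q : ℚ) (hq : q ≠ 0) (h : C q * x ∈ I) : x ∈ I := by
  have hx : x = C q⁻¹ * (C q * x) := by
    rw [← mul_assoc, ← C_mul, inv_mul_cancel₀ hq, C_1, one_mul]
  rw [hx]
  exact I.mul_mem_left _ h

lemma tau_sigma (x : MvPolynomial (Fin 3) ℚ) : τsub (σsub x) = x := by
  have h : τsub.comp σsub = AlgHom.id ℚ (MvPolynomial (Fin 3) ℚ) := by
    apply MvPolynomial.algHom_ext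
    intro i
    fin_cases i <;>
      simp [σsub, τsub, map_ofNat] <;>
      linear_combination (X 1 + 2 * (X 2 : MvPolynomial (Fin 3) ℚ)) * hC10
  simpa using AlgHom.congr_fun h x

lemma sigma_tau (x : MvPolynomial (Fin 3) ℚ) : σsub (τsub x) = x := by
  have h : σsub.comp τsub = AlgHom.id ℚ (MvPolynomial (Fin 3) ℚ) := by
    apply MvPolynomial.algHom_ext
    intro i
    fin_cases i <;>
      simp [σsub, τsub, map_ofNat] <;>
      linear_combination (X 0 : MvPolynomial (Fin 3) ℚ) * hC10
  simpa using AlgHom.congr_fun h x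

lemma sigma_bijective : Function.Bijective (σsub : MvPolynomial (Fin 3) ℚ →+* MvPolynomial (Fin 3) ℚ) := by
  constructor
  · intro a b hab
    have := congrArg τsub hab
    simpa [tau_sigma] using this
  · intro y
    exact ⟨τsub y, sigma_tau y⟩

/-- (1) In `ℚ[λ1, ψ1, θ1]`, the ideal generated by
`g₁ = (10λ1 + 10θ1)θ1`, `g₂ = 3(10λ1−2θ1)³ + 11(10λ1−2θ1)²θ1`,
`g₃ = θ1(θ1² + 2θ1ψ1 + 4ψ1²)`, `g₄ = ψ1((λ1+θ1)(7ψ1−λ1) − 12ψ1²)`,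
`g₅ = ψ1(λ1²/2 − ψ1(λ1−ψ1))` equals `K'`.
(2) Consequently the substitution `ψ1 ↦ ψ1`, `δ0 ↦ 10λ1 − 2θ1`, `δ1 ↦ θ1` induces a
`ℚ`-algebra isomorphism `ℚ[ψ1,δ0,δ1]/(γ₂,₁, γ₃,₁, γ₃,₂, γ₃,₃, γ₃,₄) ≅ ℚ[λ1,ψ1,θ1]/K'`:
writing `γ₃,₃ = ψ1·[(c)]_Q` and `γ₃,₄ = ψ1·[(d)]_Q`, where under the identification
`[(c)]_Q = (λ1+θ1)(7ψ1−λ1)−12ψ1²` and `[(d)]_Q = λ1²/2 − ψ1(λ1−ψ1)`, the composite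
`ℚ[ψ1,δ0,δ1] → ℚ[λ1,ψ1,θ1]/K'` is surjective with kernel generated by Faber's
relations `γ₂,₁ = (δ0+12δ1)δ1`, `γ₃,₁ = 3δ0³+11δ0²δ1`, `γ₃,₂ = δ1(δ1²+2δ1ψ1+4ψ1²)`,
`γ₃,₃`, `γ₃,₄`. -/
theorem faber_comparison :
    (Ideal.span {(10 * X 0 + 10 * X 2) * X 2,
        3 * (10 * X 0 - 2 * X 2) ^ 3 + 11 * (10 * X 0 - 2 * X 2) ^ 2 * X 2,
        X 2 * (X 2 ^ 2 + 2 * X 2 * X 1 + 4 * X 1 ^ 2),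
        X 1 * ((X 0 + X 2) * (7 * X 1 - X 0) - 12 * X 1 ^ 2),
        X 1 * (C (1/2 : ℚ) * X 0 ^ 2 - X 1 * (X 0 - X 1))} = K') ∧
    (∀ γc γd : MvPolynomial (Fin 3) ℚ,
      σsub γc = (X 0 + X 2) * (7 * X 1 - X 0) - 12 * X 1 ^ 2 →
      σsub γd = C (1/2 : ℚ) * X 0 ^ 2 - X 1 * (X 0 - X 1) →
      Function.Surjective ((Ideal.Quotient.mk K').comp
          (σsub : MvPolynomial (Fin 3) ℚ →+* MvPolynomial (Fin 3) ℚ)) ∧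
      RingHom.ker ((Ideal.Quotient.mk K').comp
          (σsub : MvPolynomial (Fin 3) ℚ →+* MvPolynomial (Fin 3) ℚ)) =
        Ideal.span {(X 1 + 12 * X 2) * X 2,
          3 * X 1 ^ 3 + 11 * X 1 ^ 2 * X 2,
          X 2 * (X 2 ^ 2 + 2 * X 2 * X 0 + 4 * X 0 ^ 2),
          X 0 * γc,
          X 0 * γd}) := by
  set R := MvPolynomial (Fin 3) ℚ
  -- generators of K'
  set k1 : R := X 2 * (X 0 + X 2) with hk1def
  set k2 : R := 10 * X 0 ^ 3 - 2 * X 0 ^ 2 * X 2 with hk2def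
  set k3 : R := X 1 * X 0 ^ 2 - 2 * X 1 ^ 2 * (X 0 - X 1) with hk3def
  set k4 : R := (C (1/2 : ℚ) * X 0 ^ 2 - X 1 * (X 0 - X 1)) * (X 2 + X 0 - X 1) with hk4def
  set k5 : R := 2 * X 1 * (X 0 + X 2) * (7 * X 1 - X 0) - 24 * X 1 ^ 3 with hk5def
  -- generators g
  set g1 : R := (10 * X 0 + 10 * X 2) * X 2 with hg1def
  set g2 : R := 3 * (10 * X 0 - 2 * X 2) ^ 3 + 11 * (10 * X 0 - 2 * X 2) ^ 2 * X 2 with hg2def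
  set g3 : R := X 2 * (X 2 ^ 2 + 2 * X 2 * X 1 + 4 * X 1 ^ 2) with hg3def
  set g4 : R := X 1 * ((X 0 + X 2) * (7 * X 1 - X 0) - 12 * X 1 ^ 2) with hg4def
  set g5 : R := X 1 * (C (1/2 : ℚ) * X 0 ^ 2 - X 1 * (X 0 - X 1)) with hg5def
  have hKdef : K' = Ideal.span {k1, k2, k3, k4, k5} := rfl
  have hk1 : k1 ∈ K' := hKdef ▸ Ideal.subset_span (by left; rfl)
  have hk2 : k2 ∈ K' := hKdef ▸ Ideal.subset_span (by right; left; rfl)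
  have hk3 : k3 ∈ K' := hKdef ▸ Ideal.subset_span (by right; right; left; rfl)
  have hk4 : k4 ∈ K' := hKdef ▸ Ideal.subset_span (by right; right; right; left; rfl)
  have hk5 : k5 ∈ K' := hKdef ▸ Ideal.subset_span (by right; right; right; right; rfl)
  set G : Ideal R := Ideal.span {g1, g2, g3, g4, g5} with hGdef
  have hg1 : g1 ∈ G := Ideal.subset_span (by left; rfl)
  have hg2 : g2 ∈ G := Ideal.subset_span (by right; left; rfl)
  have hg3 : g3 ∈ G := Ideal.subset_span (by right; right; left; rfl)
  have hg4 : g4 ∈ G := Ideal.subset_span (by right; right; right; left; rfl)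
  have hg5 : g5 ∈ G := Ideal.subset_span (by right; right; right; right; rfl)
  have hC12 : (C (12 : ℚ) : R) = 12 := map_ofNat _ _
  have hC2' : (C (2 : ℚ) : R) = 2 := map_ofNat _ _
  have hC10' : (C (10 : ℚ) : R) = 10 := map_ofNat _ _
  have hC300 : (C (300 : ℚ) : R) = 300 := map_ofNat _ _
  have hC6000 : (C (6000 : ℚ) : R) = 6000 := map_ofNat _ _
  -- Part 1
  have part1 : G = K' := by
    apply le_antisymm
    · rw [hGdef, Ideal.span_le]
      rintro x hx
      simp only [Set.mem_insert_iff, Set.mem_singleton_iff] at hx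
      rcases hx with rfl | rfl | rfl | rfl | rfl
      · rw [show g1 = 10 * k1 from by rw [hg1def, hk1def]; ring]
        exact K'.mul_mem_left _ hk1
      · rw [show g2 = (-100 * X 0 + 20 * X 2) * k1 + 300 * k2 from by
          rw [hg2def, hk1def, hk2def]; ring]
        exact add_mem (K'.mul_mem_left _ hk1) (K'.mul_mem_left _ hk2)
      · refine divQ_mem 12 (by norm_num) ?_
        rw [hC12, show (12 : R) * g3 =
            (-12 * X 0 + 24 * X 1 + 12 * X 2) * k1 + (-1) * k2 + 34 * k3 + 20 * k4 + 2 * k5 from by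
          rw [hg3def, hk1def, hk2def, hk3def, hk4def, hk5def]
          linear_combination (10 * X 0 ^ 2 * X 1 - 10 * X 0 ^ 2 * (X 2 : R) - 10 * X 0 ^ 3) * hC2]
        exact add_mem (add_mem (add_mem (add_mem (K'.mul_mem_left _ hk1) (K'.mul_mem_left _ hk2))
          (K'.mul_mem_left _ hk3)) (K'.mul_mem_left _ hk4)) (K'.mul_mem_left _ hk5)
      · refine divQ_mem 2 (by norm_num) ?_
        rw [hC2', show (2 : R) * g4 = k5 from by rw [hg4def, hk5def]; ring]
        exact hk5
      · refine divQ_mem 2 (by norm_num) ?_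
        rw [hC2', show (2 : R) * g5 = k3 from by
          rw [hg5def, hk3def]
          linear_combination (X 0 ^ 2 * (X 1 : R)) * hC2]
        exact hk3
    · rw [hKdef, Ideal.span_le]
      rintro x hx
      simp only [Set.mem_insert_iff, Set.mem_singleton_iff] at hx
      rcases hx with rfl | rfl | rfl | rfl | rfl
      · refine divQ_mem 10 (by norm_num) ?_
        rw [hC10', show (10 : R) * k1 = g1 from by rw [hg1def, hk1def]; ring]
        exact hg1
      · refine divQ_mem 300 (by norm_num) ?_
        rw [hC300, show (300 : R) * k2 = (10 * X 0 - 2 * X 2) * g1 + 1 * g2 from by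
          rw [hg1def, hg2def, hk2def]; ring]
        exact add_mem (G.mul_mem_left _ hg1) (G.mul_mem_left _ hg2)
      · rw [show k3 = 2 * g5 from by
          rw [hg5def, hk3def]
          linear_combination (-(X 0 ^ 2) * (X 1 : R)) * hC2]
        exact G.mul_mem_left _ hg5
      · refine divQ_mem 6000 (by norm_num) ?_
        rw [hC6000, show (6000 : R) * k4 =
            (370 * X 0 - 720 * X 1 - 362 * X 2) * g1 + 1 * g2 + 3600 * g3
              + (-1200) * g4 + (-20400) * g5 from by
          rw [hg1def, hg2def, hg3def, hg4def, hg5def, hk4def]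
          linear_combination (3000 * X 0 ^ 2 * (X 2 : R) + 7200 * X 0 ^ 2 * X 1
            + 3000 * X 0 ^ 3) * hC2]
        exact add_mem (add_mem (add_mem (add_mem (G.mul_mem_left _ hg1) (G.mul_mem_left _ hg2))
          (G.mul_mem_left _ hg3)) (G.mul_mem_left _ hg4)) (G.mul_mem_left _ hg5)
      · rw [show k5 = 2 * g4 from by rw [hg4def, hk5def]; ring]
        exact G.mul_mem_left _ hg4
  refine ⟨part1, fun γc γd hγc hγd => ?_⟩
  constructor
  · rw [RingHom.coe_comp]
    exact Function.Surjective.comp Ideal.Quotient.mk_surjective sigma_bijective.2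
  · rw [← RingHom.comap_ker, Ideal.mk_ker]
    have e1 : σsub ((X 1 + 12 * X 2) * X 2) = g1 := by
      rw [hg1def]; simp [σsub, map_ofNat]; ring
    have e2 : σsub (3 * X 1 ^ 3 + 11 * X 1 ^ 2 * X 2) = g2 := by
      rw [hg2def]; simp [σsub, map_ofNat]
    have e3 : σsub (X 2 * (X 2 ^ 2 + 2 * X 2 * X 0 + 4 * X 0 ^ 2)) = g3 := by
      rw [hg3def]; simp [σsub, map_ofNat]
    have e4 : σsub (X 0 * γc) = g4 := by
      rw [hg4def, map_mul, hγc, show σsub (X 0) = (X 1 : R) from by simp [σsub]]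
    have e5 : σsub (X 0 * γd) = g5 := by
      rw [hg5def, map_mul, hγd, show σsub (X 0) = (X 1 : R) from by simp [σsub]]
    have hmap : Ideal.map (σsub : R →+* R)
        (Ideal.span {(X 1 + 12 * X 2) * X 2,
          3 * X 1 ^ 3 + 11 * X 1 ^ 2 * X 2,
          X 2 * (X 2 ^ 2 + 2 * X 2 * X 0 + 4 * X 0 ^ 2),
          X 0 * γc, X 0 * γd}) = K' := by
      rw [Ideal.map_span]
      rw [Set.image_insert_eq, Set.image_insert_eq, Set.image_insert_eq,
        Set.image_insert_eq, Set.image_singleton]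
      simp only [RingHom.coe_coe]
      rw [e1, e2, e3, e4, e5]
      exact part1
    rw [← hmap, Ideal.comap_map_of_bijective _ sigma_bijective]
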